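/- For the Hamilton algebra Ha(3) (N = 3), the element C := (J_12')² + (J_13')² + (J_23')², where J_ij' = J_ij R + G_i F_j − G_j F_i, is a central element of the universal enveloping algebra U(Ha(3)). -/

import Mathlib

/-!
The elements `J'ᵢⱼ = Jᵢⱼ R + Gᵢ Fⱼ − Gⱼ Fᵢ` of `U(Ha(N))` commute with every `Gₖ`, `Fₖ` and `R`:
the terms coming from `[Gₖ, Fⱼ] = δₖⱼ R` exactly cancel the rotation of `Jᵢⱼ R`. Moreover
`ad Jᵢⱼ` acts on the `J'` by the same `so(N)` relations as on the `J`. For `N = 3` each `Jᵢⱼ`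
therefore fixes one `J'` and rotates the other two, so `C = ∑ (J'ᵢⱼ)²` commutes with all of
`Ha(3)`; since `Ha(3)` generates `U(Ha(3))`, `C` is central.
-/

open UniversalEnvelopingAlgebra

/-- Kronecker delta with values in a field `k`. -/
def kdelta (k : Type*) [Field k] {N : ℕ} (a b : Fin N) : k := if a = b then 1 else 0

attribute [local instance 100] LieRing.ofAssociativeRing

namespace UniversalEnvelopingAlgebra

variable {R L : Type*} [CommRing R] [LieRing L] [LieAlgebra R L]

theorem adjoin_range_ι :
    Algebra.adjoin R (Set.range (ι R : L → UniversalEnvelopingAlgebra R L)) = ⊤ := by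
  have hι : Set.range (ι R : L → UniversalEnvelopingAlgebra R L) =
      mkAlgHom R L '' Set.range (TensorAlgebra.ι R) := by
    rw [← Set.range_comp]
    rfl
  rw [hι, ← AlgHom.map_adjoin, TensorAlgebra.adjoin_range_ι, Algebra.map_top,
    AlgHom.range_eq_top]
  exact RingCon.mkₐ_surjective _

theorem mem_center_of_commute_ι {s : Set L} (hs : Submodule.span R s = ⊤)
    {u : UniversalEnvelopingAlgebra R L} (h : ∀ x ∈ s, Commute (ι R x) u) :
    u ∈ Subalgebra.center R (UniversalEnvelopingAlgebra R L) := by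
  have hι : ∀ x, Commute (ι R x) u := fun x => by
    induction (hs ▸ Submodule.mem_top : x ∈ Submodule.span R s) using Submodule.span_induction with
    | mem x hx => exact h x hx
    | zero => rw [map_zero]; exact Commute.zero_left u
    | add x y _ _ hx hy => rw [map_add]; exact hx.add_left hy
    | smul c x _ hx => rw [map_smul]; exact hx.smul_left c
  have hle : Algebra.adjoin R (Set.range (ι R)) ≤ Subalgebra.centralizer R {u} := by
    rw [Algebra.adjoin_le_iff]
    rintro _ ⟨x, rfl⟩ _ rfl
    exact (hι x).symm
  rw [adjoin_range_ι] at hle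
  exact Subalgebra.mem_center_iff.mpr fun b => (hle Algebra.mem_top u rfl).symm

end UniversalEnvelopingAlgebra

theorem kdelta_comm (k : Type*) [Field k] {N : ℕ} (a b : Fin N) :
    kdelta k a b = kdelta k b a := by
  simp only [kdelta, eq_comm]

theorem Ring.lie_mul {A : Type*} [Ring A] (x y z : A) :
    ⁅x, y * z⁆ = ⁅x, y⁆ * z + y * ⁅x, z⁆ := by
  simp only [Ring.lie_def]
  noncomm_ring

theorem commute_sq_add_sq_of_lie_eq {A : Type*} [Ring A] {y b c : A}
    (hb : ⁅y, b⁆ = -c) (hc : ⁅y, c⁆ = b) : Commute y (b ^ 2 + c ^ 2) := by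
  have h : ⁅y, b ^ 2 + c ^ 2⁆ = ⁅y, b⁆ * b + b * ⁅y, b⁆ + (⁅y, c⁆ * c + c * ⁅y, c⁆) := by
    simp only [Ring.lie_def]
    noncomm_ring
  rw [commute_iff_lie_eq, h, hb, hc]
  noncomm_ring

section HamiltonJ'

variable {k g A : Type*} [Field k] [LieRing g] [LieAlgebra k g] [Ring A] [Algebra k A]
  (φ : g →ₗ⁅k⁆ A) {N : ℕ} (J : Fin N → Fin N → g) (G F : Fin N → g) (R : g)

def hamiltonJ' (a b : Fin N) : A := φ (J a b) * φ R + φ (G a) * φ (F b) - φ (G b) * φ (F a)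

variable {φ J G F R}

theorem commute_G_hamiltonJ' (hGF : ∀ i j, ⁅G i, F j⁆ = kdelta k i j • R)
    (hJG : ∀ i j l, ⁅J i j, G l⁆ = -(kdelta k i l • G j) + kdelta k j l • G i)
    (hGG : ∀ i j, ⁅G i, G j⁆ = 0) (hGR : ∀ i, ⁅G i, R⁆ = 0) (c a b : Fin N) :
    Commute (φ (G c)) (hamiltonJ' φ J G F R a b) := by
  rw [commute_iff_lie_eq, hamiltonJ', lie_sub, lie_add]
  simp only [Ring.lie_mul, ← LieHom.map_lie, ← lie_skew (G c) (J a b), hGF, hJG, hGG, hGR]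
  simp only [map_add, map_neg, map_smul, map_zero, smul_mul_assoc, mul_smul_comm, neg_mul,
    add_mul, mul_zero, zero_mul, kdelta_comm k c]
  module

theorem commute_F_hamiltonJ' (hGF : ∀ i j, ⁅G i, F j⁆ = kdelta k i j • R)
    (hJF : ∀ i j l, ⁅J i j, F l⁆ = -(kdelta k i l • F j) + kdelta k j l • F i)
    (hFF : ∀ i j, ⁅F i, F j⁆ = 0) (hFR : ∀ i, ⁅F i, R⁆ = 0) (c a b : Fin N) :
    Commute (φ (F c)) (hamiltonJ' φ J G F R a b) := by
  have hRF : ∀ i, φ R * φ (F i) = φ (F i) * φ R := fun i =>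
    (commute_iff_lie_eq.mpr (by rw [← LieHom.map_lie, hFR, map_zero])).symm.eq
  rw [commute_iff_lie_eq, hamiltonJ', lie_sub, lie_add]
  simp only [Ring.lie_mul, ← LieHom.map_lie, ← lie_skew (F c) (J a b), ← lie_skew (F c) (G _),
    hGF, hJF, hFF, hFR]
  simp only [map_add, map_neg, map_smul, map_zero, smul_mul_assoc, neg_mul, add_mul, mul_zero,
    add_zero, hRF]
  module

theorem commute_R_hamiltonJ' (hJR : ∀ i j, ⁅J i j, R⁆ = 0) (hGR : ∀ i, ⁅G i, R⁆ = 0)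
    (hFR : ∀ i, ⁅F i, R⁆ = 0) (a b : Fin N) :
    Commute (φ R) (hamiltonJ' φ J G F R a b) := by
  rw [commute_iff_lie_eq, hamiltonJ', lie_sub, lie_add]
  simp only [Ring.lie_mul, ← LieHom.map_lie, ← lie_skew R, hJR, hGR, hFR, lie_self, neg_zero,
    map_zero, zero_mul, mul_zero, add_zero, sub_self]

theorem lie_J_hamiltonJ' (hJJ : ∀ i j l m, ⁅J i j, J l m⁆ =
      kdelta k i m • J j l + kdelta k j l • J i m - kdelta k j m • J i l - kdelta k i l • J j m)
    (hJG : ∀ i j l, ⁅J i j, G l⁆ = -(kdelta k i l • G j) + kdelta k j l • G i)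
    (hJF : ∀ i j l, ⁅J i j, F l⁆ = -(kdelta k i l • F j) + kdelta k j l • F i)
    (hJR : ∀ i j, ⁅J i j, R⁆ = 0) (i j l m : Fin N) :
    ⁅φ (J i j), hamiltonJ' φ J G F R l m⁆ =
      kdelta k i m • hamiltonJ' φ J G F R j l + kdelta k j l • hamiltonJ' φ J G F R i m
        - kdelta k j m • hamiltonJ' φ J G F R i l - kdelta k i l • hamiltonJ' φ J G F R j m := by
  simp only [hamiltonJ', lie_sub, lie_add, Ring.lie_mul, ← LieHom.map_lie, hJJ, hJG, hJF, hJR]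
  simp only [map_add, map_sub, map_neg, map_smul, map_zero, smul_mul_assoc, mul_smul_comm,
    neg_mul, add_mul, sub_mul, mul_add, mul_neg, mul_zero, add_zero]
  module

-- `hJa` does not force `J i i = 0` in characteristic 2; the diagonal terms cancel by `hJJ`.
theorem commute_J_hamiltonJ'_self (hJJ : ∀ i j l m, ⁅J i j, J l m⁆ =
      kdelta k i m • J j l + kdelta k j l • J i m - kdelta k j m • J i l - kdelta k i l • J j m)
    (hJG : ∀ i j l, ⁅J i j, G l⁆ = -(kdelta k i l • G j) + kdelta k j l • G i)
    (hJF : ∀ i j l, ⁅J i j, F l⁆ = -(kdelta k i l • F j) + kdelta k j l • F i)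
    (hJR : ∀ i j, ⁅J i j, R⁆ = 0) {i j : Fin N} (hij : i ≠ j) :
    Commute (φ (J i j)) (hamiltonJ' φ J G F R i j) := by
  have hJ_diag : J i i + J j j = 0 := by
    have h := hJJ i j i j
    simp only [lie_self, kdelta, hij, hij.symm, ↓reduceIte, zero_smul, one_smul] at h
    linear_combination (norm := module) h
  have hJ'_diag :
      hamiltonJ' φ J G F R i i + hamiltonJ' φ J G F R j j = φ (J i i + J j j) * φ R := by
    simp only [hamiltonJ', map_add, add_mul]
    abel
  rw [hJ_diag, map_zero, zero_mul] at hJ'_diag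
  rw [commute_iff_lie_eq, lie_J_hamiltonJ' hJJ hJG hJF hJR]
  simp only [kdelta, hij, hij.symm, ↓reduceIte, zero_smul, one_smul]
  linear_combination (norm := module) -hJ'_diag

theorem hamiltonJ'_swap (hJa : ∀ i j, J i j = -J j i) (a b : Fin N) :
    hamiltonJ' φ J G F R b a = -hamiltonJ' φ J G F R a b := by
  simp only [hamiltonJ', hJa b a, map_neg, neg_mul]
  abel

end HamiltonJ'

section HamiltonCasimir

variable {k g A : Type*} [Field k] [LieRing g] [LieAlgebra k g] [Ring A] [Algebra k A]
  (φ : g →ₗ⁅k⁆ A) (J : Fin 3 → Fin 3 → g) (G F : Fin 3 → g) (R : g)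

def hamiltonCasimir : A :=
  hamiltonJ' φ J G F R 0 1 ^ 2 + hamiltonJ' φ J G F R 0 2 ^ 2 + hamiltonJ' φ J G F R 1 2 ^ 2

variable {φ J G F R}

theorem commute_hamiltonCasimir_of_forall {y : A}
    (h : ∀ a b, Commute y (hamiltonJ' φ J G F R a b)) :
    Commute y (hamiltonCasimir φ J G F R) :=
  (((h 0 1).pow_right 2).add_right ((h 0 2).pow_right 2)).add_right ((h 1 2).pow_right 2)

theorem commute_J_hamiltonCasimir (hJa : ∀ i j, J i j = -J j i)
    (hJJ : ∀ i j l m, ⁅J i j, J l m⁆ =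
      kdelta k i m • J j l + kdelta k j l • J i m - kdelta k j m • J i l - kdelta k i l • J j m)
    (hJG : ∀ i j l, ⁅J i j, G l⁆ = -(kdelta k i l • G j) + kdelta k j l • G i)
    (hJF : ∀ i j l, ⁅J i j, F l⁆ = -(kdelta k i l • F j) + kdelta k j l • F i)
    (hJR : ∀ i j, ⁅J i j, R⁆ = 0) {i j : Fin 3} (hij : i < j) :
    Commute (φ (J i j)) (hamiltonCasimir φ J G F R) := by
  have hrot := lie_J_hamiltonJ' (φ := φ) hJJ hJG hJF hJR
  have hswap := hamiltonJ'_swap (φ := φ) (G := G) (F := F) (R := R) hJa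
  have hself := fun {a b : Fin 3} (hab : a ≠ b) =>
    (commute_J_hamiltonJ'_self (φ := φ) hJJ hJG hJF hJR hab).pow_right 2
  fin_cases i <;> fin_cases j <;> try exact absurd hij (by decide)
  · rw [hamiltonCasimir, add_assoc]
    exact (hself (by decide)).add_right
      (commute_sq_add_sq_of_lie_eq (by simp [hrot, kdelta]) (by simp [hrot, kdelta]))
  · rw [hamiltonCasimir, add_right_comm, add_comm (hamiltonJ' φ J G F R 0 1 ^ 2)]
    exact (commute_sq_add_sq_of_lie_eq (by simp [hrot, kdelta, hswap 2 1])
      (by simp [hrot, kdelta, hswap 2 1])).add_right (hself (by decide))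
  · rw [hamiltonCasimir]
    exact (commute_sq_add_sq_of_lie_eq (by simp [hrot, kdelta, hswap 2 0])
      (by simp [hrot, kdelta, hswap 1 0])).add_right (hself (by decide))

end HamiltonCasimir

/-- For the Hamilton algebra `Ha(3)`, the element
`C = (J'_12)² + (J'_13)² + (J'_23)²`, with `J'_ij = J_ij R + G_i F_j − G_j F_i`,
is a central element of `U(Ha(3))`. -/
theorem hamilton3_casimir_central
    (k : Type*) [Field k] (g : Type*) [LieRing g] [LieAlgebra k g]
    (J : Fin 3 → Fin 3 → g) (G F : Fin 3 → g) (R : g)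
    (hJa : ∀ i j, J i j = -J j i)
    (hJJ : ∀ i j l m, ⁅J i j, J l m⁆ =
      kdelta k i m • J j l + kdelta k j l • J i m - kdelta k j m • J i l - kdelta k i l • J j m)
    (hGF : ∀ i j, ⁅G i, F j⁆ = kdelta k i j • R)
    (hJG : ∀ i j l, ⁅J i j, G l⁆ = -(kdelta k i l • G j) + kdelta k j l • G i)
    (hJF : ∀ i j l, ⁅J i j, F l⁆ = -(kdelta k i l • F j) + kdelta k j l • F i)
    (hGG : ∀ i j, ⁅G i, G j⁆ = 0) (hFF : ∀ i j, ⁅F i, F j⁆ = 0)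
    (hJR : ∀ i j, ⁅J i j, R⁆ = 0) (hGR : ∀ i, ⁅G i, R⁆ = 0) (hFR : ∀ i, ⁅F i, R⁆ = 0)
    -- the listed elements span `Ha(3)`
    (hspan : Submodule.span k
      ({J 0 1, J 0 2, J 1 2, G 0, G 1, G 2, F 0, F 1, F 2, R} : Set g) = ⊤) :
    ((fun a b => (ι k (J a b) : UniversalEnvelopingAlgebra k g) * ι k R
        + ι k (G a) * ι k (F b) - ι k (G b) * ι k (F a)) 0 1) ^ 2
    + ((fun a b => (ι k (J a b) : UniversalEnvelopingAlgebra k g) * ι k R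
        + ι k (G a) * ι k (F b) - ι k (G b) * ι k (F a)) 0 2) ^ 2
    + ((fun a b => (ι k (J a b) : UniversalEnvelopingAlgebra k g) * ι k R
        + ι k (G a) * ι k (F b) - ι k (G b) * ι k (F a)) 1 2) ^ 2
      ∈ Subalgebra.center k (UniversalEnvelopingAlgebra k g) := by
  
  show hamiltonCasimir (ι k) J G F R ∈ _
  have hJ : ∀ i j : Fin 3, i < j → Commute (ι k (J i j)) (hamiltonCasimir (ι k) J G F R) :=
    fun _ _ => commute_J_hamiltonCasimir hJa hJJ hJG hJF hJR
  have hG : ∀ c, Commute (ι k (G c)) (hamiltonCasimir (ι k) J G F R) := fun c =>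
    commute_hamiltonCasimir_of_forall (commute_G_hamiltonJ' hGF hJG hGG hGR c)
  have hF : ∀ c, Commute (ι k (F c)) (hamiltonCasimir (ι k) J G F R) := fun c =>
    commute_hamiltonCasimir_of_forall (commute_F_hamiltonJ' hGF hJF hFF hFR c)
  have hR : Commute (ι k R) (hamiltonCasimir (ι k) J G F R) :=
    commute_hamiltonCasimir_of_forall (commute_R_hamiltonJ' hJR hGR hFR)
  refine mem_center_of_commute_ι hspan ?_
  rintro x (rfl | rfl | rfl | rfl | rfl | rfl | rfl | rfl | rfl | rfl)
  exacts [hJ 0 1 (by decide), hJ 0 2 (by decide), hJ 1 2 (by decide), hG 0, hG 1, hG 2,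
    hF 0, hF 1, hF 2, hR]
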